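/- Let D ≥ 1, let N ≥ 1, let a : Fin N → ℝ^D and b : Fin N → ℝ have pairwise distinct centers with ‖a_{n₁} − a_{n₂}‖₂ ≠ |b_{n₁} − b_{n₂}| for all n₁ ≠ n₂, and let u(x) = min over n of (‖x − a_n‖₂ + b_n). Suppose u is Fréchet differentiable at x and let m be the unique index with u(x) = ‖x − a_m‖₂ + b_m. Then there is no point x₀ ∈ ℝ^D with x₀ ≠ a_m, a_m lying on the segment [x₀, x], and u(x₀) + ‖a_m − x₀‖₂ = b_m; in other words, a_m is the lower endpoint of the transport ray of u through x. -/

import Mathlib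

/-! The value of the funnel `m` active at `x` is `b m` at its own center: by the 1-Lipschitz bound
`u x ≤ ‖x - a m‖ + u (a m)`. Hence, if the ray through `x` extended below `a m` to some `x₀` with
active funnel `k`, then `b m = ‖a m - x₀‖ + ‖x₀ - a k‖ + b k ≥ ‖a m - a k‖ + b k ≥ u (a m) = b m`,
so `‖a m - a k‖ = b m - b k`. This is excluded by genericity when `k ≠ m`, and when `k = m` it
forces `x₀ = a m`. -/

namespace MinFunnel

variable {ι E : Type*} [Finite ι] [SeminormedAddCommGroup E] (a : ι → E) (b : ι → ℝ)

noncomputable def minFunnel (z : E) : ℝ := ⨅ n, (‖z - a n‖ + b n)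

variable {a b}

theorem minFunnel_le (z : E) (n : ι) : minFunnel a b z ≤ ‖z - a n‖ + b n :=
  ciInf_le (Set.finite_range _).bddBelow n

theorem exists_minFunnel_eq [Nonempty ι] (z : E) : ∃ n, minFunnel a b z = ‖z - a n‖ + b n :=
  (exists_eq_ciInf_of_finite (f := fun n => ‖z - a n‖ + b n)).imp fun _ h => h.symm

theorem minFunnel_le_norm_sub_add [Nonempty ι] (y z : E) :
    minFunnel a b y ≤ ‖y - z‖ + minFunnel a b z := by
  have h : ∀ n, minFunnel a b y - ‖y - z‖ ≤ ‖z - a n‖ + b n := fun n => by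
    linarith [minFunnel_le (a := a) (b := b) y n, norm_sub_le_norm_sub_add_norm_sub y z (a n)]
  have hinf : minFunnel a b y - ‖y - z‖ ≤ minFunnel a b z := le_ciInf h
  linarith

theorem minFunnel_center {x : E} {m : ι} (hm : minFunnel a b x = ‖x - a m‖ + b m) :
    minFunnel a b (a m) = b m := by
  have : Nonempty ι := ⟨m⟩
  have hle := minFunnel_le (a := a) (b := b) (a m) m
  rw [sub_self, norm_zero, zero_add] at hle
  linarith [minFunnel_le_norm_sub_add (a := a) (b := b) x (a m)]

theorem norm_sub_eq_of_minFunnel_add_norm_eq {x₀ : E} {m k : ι}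
    (hcenter : minFunnel a b (a m) = b m) (hx₀ : minFunnel a b x₀ + ‖a m - x₀‖ = b m)
    (hk : minFunnel a b x₀ = ‖x₀ - a k‖ + b k) : ‖a m - a k‖ = b m - b k := by
  have hupper := minFunnel_le (a := a) (b := b) (a m) k
  linarith [norm_sub_le_norm_sub_add_norm_sub (a m) x₀ (a k)]

end MinFunnel

open MinFunnel in
theorem minFunnel_ray_lower_endpoint_general
    (D : ℕ) (N : ℕ)
    (a : Fin N → EuclideanSpace ℝ (Fin D)) (b : Fin N → ℝ)
    (hgen : ∀ n₁ n₂ : Fin N, n₁ ≠ n₂ → ‖a n₁ - a n₂‖ ≠ |b n₁ - b n₂|)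
    (x : EuclideanSpace ℝ (Fin D))
    (m : Fin N)
    (hm : (⨅ n : Fin N, (‖x - a n‖ + b n)) = ‖x - a m‖ + b m) :
    ¬ ∃ x₀ : EuclideanSpace ℝ (Fin D),
        x₀ ≠ a m ∧ a m ∈ segment ℝ x₀ x ∧
        (⨅ n : Fin N, (‖x₀ - a n‖ + b n)) + ‖a m - x₀‖ = b m := by
  rintro ⟨x₀, hne, -, hx₀ : minFunnel a b x₀ + ‖a m - x₀‖ = b m⟩
  have : Nonempty (Fin N) := ⟨m⟩
  obtain ⟨k, hk⟩ := exists_minFunnel_eq (a := a) (b := b) x₀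
  have hmk : ‖a m - a k‖ = b m - b k :=
    norm_sub_eq_of_minFunnel_add_norm_eq (minFunnel_center hm) hx₀ hk
  by_cases hkm : k = m
  · subst hkm
    have : ‖x₀ - a k‖ = 0 := by linarith [norm_sub_rev x₀ (a k), norm_nonneg (x₀ - a k)]
    exact hne (norm_sub_eq_zero_iff.mp this)
  · exact hgen m k (Ne.symm hkm) (by rw [hmk, abs_of_nonneg (hmk ▸ norm_nonneg _)])

/-- The active center `a m` is the lower endpoint of the transport ray of a
MinFunnel through a differentiability point `x`: the ray cannot be extended
below `a m`. -/
theorem minFunnel_ray_lower_endpoint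
    (D : ℕ) (hD : 1 ≤ D) (N : ℕ) (hN : 1 ≤ N)
    (a : Fin N → EuclideanSpace ℝ (Fin D)) (b : Fin N → ℝ)
    (hdist : ∀ n₁ n₂ : Fin N, n₁ ≠ n₂ → a n₁ ≠ a n₂)
    (hgen : ∀ n₁ n₂ : Fin N, n₁ ≠ n₂ → ‖a n₁ - a n₂‖ ≠ |b n₁ - b n₂|)
    (x : EuclideanSpace ℝ (Fin D))
    (hdiff : DifferentiableAt ℝ (fun z => ⨅ n : Fin N, (‖z - a n‖ + b n)) x)
    (m : Fin N)
    (hm : (⨅ n : Fin N, (‖x - a n‖ + b n)) = ‖x - a m‖ + b m) :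
    ¬ ∃ x₀ : EuclideanSpace ℝ (Fin D),
        x₀ ≠ a m ∧ a m ∈ segment ℝ x₀ x ∧
        (⨅ n : Fin N, (‖x₀ - a n‖ + b n)) + ‖a m - x₀‖ = b m :=
  minFunnel_ray_lower_endpoint_general D N a b hgen x m hm
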